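/- arXiv:2107.04659 — 3 statements merged into one kernel-verified Lean document; each statement's English description precedes it below -/
import Mathlib

section
/- A proper graded ideal I of R is a graded n-almost 1-absorbing prime ideal of R for every n ≥ 2 if and only if I is a graded ω-1-absorbing prime ideal of R. -/
/-- `I` is a graded 1-absorbing prime ideal "relative to" the subtraction of the set `S`:
whenever `a b c` are nonunit homogeneous elements with `a*b*c ∈ I - S`,
then `a*b ∈ I` or `c ∈ I`. -/
def IsGrOneAbsPrimeWrt {ι R : Type*} [AddGroup ι] [DecidableEq ι] [CommRing R]
    (𝒜 : ι → AddSubgroup R) [GradedRing 𝒜] (S : Set R) (I : HomogeneousIdeal 𝒜) : Prop :=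
  I.toIdeal ≠ ⊤ ∧ ∀ a b c : R, SetLike.IsHomogeneousElem 𝒜 a → SetLike.IsHomogeneousElem 𝒜 b →
    SetLike.IsHomogeneousElem 𝒜 c → ¬IsUnit a → ¬IsUnit b → ¬IsUnit c →
    a * b * c ∈ I.toIdeal → a * b * c ∉ S → a * b ∈ I.toIdeal ∨ c ∈ I.toIdeal

section IsGrOneAbsPrimeWrt

variable {ι R : Type*} [AddGroup ι] [DecidableEq ι] [CommRing R]
  {𝒜 : ι → AddSubgroup R} [GradedRing 𝒜] {I : HomogeneousIdeal 𝒜}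

theorem IsGrOneAbsPrimeWrt.of_inter_subset {S T : Set R} (h : IsGrOneAbsPrimeWrt 𝒜 S I)
    (hST : S ∩ I.toIdeal ⊆ T) : IsGrOneAbsPrimeWrt 𝒜 T I :=
  ⟨h.1, fun a b c ha hb hc ua ub uc hmem hT =>
    h.2 a b c ha hb hc ua ub uc hmem fun hS => hT (hST ⟨hS, hmem⟩)⟩

theorem isGrOneAbsPrimeWrt_iInter {κ : Type*} [Nonempty κ] {S : κ → Set R}
    (h : ∀ k, IsGrOneAbsPrimeWrt 𝒜 (S k) I) : IsGrOneAbsPrimeWrt 𝒜 (⋂ k, S k) I := by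
  refine ⟨(h (Classical.arbitrary κ)).1, fun a b c ha hb hc ua ub uc hmem hnot => ?_⟩
  obtain ⟨k, hk⟩ := not_forall.mp (Set.mem_iInter.not.mp hnot)
  exact (h k).2 a b c ha hb hc ua ub uc hmem hk

end IsGrOneAbsPrimeWrt

theorem stmt1_general {ι R : Type*} [AddGroup ι] [DecidableEq ι] [CommRing R]
    (𝒜 : ι → AddSubgroup R) [GradedRing 𝒜]
    (I : HomogeneousIdeal 𝒜) :
    (∀ n : ℕ, 2 ≤ n → IsGrOneAbsPrimeWrt 𝒜 ((I.toIdeal ^ n : Ideal R) : Set R) I) ↔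
      IsGrOneAbsPrimeWrt 𝒜 (⋂ n ∈ Set.Ici 1, ((I.toIdeal ^ n : Ideal R) : Set R)) I := by
  constructor
  · intro h
    have hω := isGrOneAbsPrimeWrt_iInter fun n : {n : ℕ // 2 ≤ n} => h n n.2
    refine hω.of_inter_subset fun x ⟨hpow, hI⟩ => Set.mem_iInter₂.mpr fun n hn => ?_
    rcases (Set.mem_Ici.mp hn).eq_or_lt with rfl | hn
    · -- the factor `I ^ 1 = I` is harmless: only elements of `I` are ever tested
      simpa using hI
    · exact Set.mem_iInter.mp hpow ⟨n, hn⟩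
  · intro h n hn
    exact h.of_inter_subset fun x ⟨hx, _⟩ => Set.mem_iInter₂.mp hx n (one_le_two.trans hn)

/-- A proper graded ideal `I` is a graded `n`-almost 1-absorbing prime ideal of `R`
for every `n ≥ 2` if and only if `I` is a graded `ω`-1-absorbing prime ideal of `R`
(here the `ω`-condition subtracts `⋂_{n ≥ 1} Iⁿ`). -/
theorem stmt1 {ι R : Type*} [AddGroup ι] [DecidableEq ι] [CommRing R] [Nontrivial R]
    (𝒜 : ι → AddSubgroup R) [GradedRing 𝒜]
    (I : HomogeneousIdeal 𝒜) (hproper : I.toIdeal ≠ ⊤) :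
    (∀ n : ℕ, 2 ≤ n → IsGrOneAbsPrimeWrt 𝒜 ((I.toIdeal ^ n : Ideal R) : Set R) I) ↔
      IsGrOneAbsPrimeWrt 𝒜 (⋂ n ∈ Set.Ici 1, ((I.toIdeal ^ n : Ideal R) : Set R)) I :=
  stmt1_general 𝒜 I
end

section
/- Let R be a graded von Neumann regular ring and let x ∈ h(R) be a nonunit homogeneous element. Then the principal graded ideal Rx is a graded almost 1-absorbing prime ideal of R. -/
/-! In a graded von Neumann regular ring every homogeneous `x` satisfies `x = x²y`, so
`Rx = (Rx)²` and the set `Rx - (Rx)²` is empty: the absorbing condition holds vacuously. -/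

/-- `R` is a graded von Neumann regular ring: for each `g` and each `a ∈ R_g`,
there exists `y ∈ R_{g⁻¹}` such that `a = a²y`. -/
def GradedVNRegular {ι R : Type*} [AddGroup ι] [CommRing R]
    (𝒜 : ι → AddSubgroup R) : Prop :=
  ∀ g : ι, ∀ a ∈ 𝒜 g, ∃ y ∈ 𝒜 (-g), a = a ^ 2 * y

theorem Ideal.span_singleton_sq_eq_self_of_eq_sq_mul {R : Type*} [CommSemiring R] {x y : R}
    (h : x = x ^ 2 * y) : Ideal.span {x} ^ 2 = Ideal.span {x} := by
  rw [Ideal.span_singleton_pow]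
  apply le_antisymm
  · exact Ideal.span_singleton_le_span_singleton.mpr (dvd_pow_self x two_ne_zero)
  · exact Ideal.span_singleton_le_span_singleton.mpr ⟨y, h⟩

theorem GradedVNRegular.span_singleton_sq_eq_self {ι R : Type*} [AddGroup ι] [CommRing R]
    {𝒜 : ι → AddSubgroup R} (hreg : GradedVNRegular 𝒜) {x : R}
    (hx : SetLike.IsHomogeneousElem 𝒜 x) : Ideal.span {x} ^ 2 = Ideal.span {x} := by
  obtain ⟨g, hg⟩ := hx
  obtain ⟨y, -, hxy⟩ := hreg g x hg
  exact Ideal.span_singleton_sq_eq_self_of_eq_sq_mul hxy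

theorem stmt18_general {ι R : Type*} [AddGroup ι] [DecidableEq ι] [CommRing R]
    (𝒜 : ι → AddSubgroup R) [GradedRing 𝒜]
    (hreg : GradedVNRegular 𝒜)
    (x : R) (hx : SetLike.IsHomogeneousElem 𝒜 x) (hxu : ¬IsUnit x) :
    (Ideal.span {x}).IsHomogeneous 𝒜 ∧ Ideal.span {x} ≠ ⊤ ∧
    ∀ a b c : R, SetLike.IsHomogeneousElem 𝒜 a → SetLike.IsHomogeneousElem 𝒜 b →
      SetLike.IsHomogeneousElem 𝒜 c → ¬IsUnit a → ¬IsUnit b → ¬IsUnit c →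
      a * b * c ∈ Ideal.span {x} → a * b * c ∉ (Ideal.span {x}) ^ 2 →
      a * b ∈ Ideal.span {x} ∨ c ∈ Ideal.span {x} := by
  refine ⟨Ideal.homogeneous_span 𝒜 _ (by simpa using hx),
    mt Ideal.span_singleton_eq_top.mp hxu, ?_⟩
  intro a b c _ _ _ _ _ _ habc habc_notMem
  rw [hreg.span_singleton_sq_eq_self hx] at habc_notMem
  exact absurd habc habc_notMem

/-- Let `R` be a graded von Neumann regular ring and `x ∈ h(R)` a nonunit. Then `Rx` is a
graded almost 1-absorbing prime ideal of `R`: it is a proper graded ideal, and whenever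
`a, b, c ∈ h(R)` are nonunits with `abc ∈ Rx - (Rx)²`, then `ab ∈ Rx` or `c ∈ Rx`. -/
theorem stmt18 {ι R : Type*} [AddGroup ι] [DecidableEq ι] [CommRing R] [Nontrivial R]
    (𝒜 : ι → AddSubgroup R) [GradedRing 𝒜]
    (hreg : GradedVNRegular 𝒜)
    (x : R) (hx : SetLike.IsHomogeneousElem 𝒜 x) (hxu : ¬IsUnit x) :
    (Ideal.span {x}).IsHomogeneous 𝒜 ∧ Ideal.span {x} ≠ ⊤ ∧
    ∀ a b c : R, SetLike.IsHomogeneousElem 𝒜 a → SetLike.IsHomogeneousElem 𝒜 b →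
      SetLike.IsHomogeneousElem 𝒜 c → ¬IsUnit a → ¬IsUnit b → ¬IsUnit c →
      a * b * c ∈ Ideal.span {x} → a * b * c ∉ (Ideal.span {x}) ^ 2 →
      a * b ∈ Ideal.span {x} ∨ c ∈ Ideal.span {x} :=
  stmt18_general 𝒜 hreg x hx hxu
end

section
/- Let R be a graded von Neumann regular ring and let x ∈ h(R) be a homogeneous element. Then there exists an idempotent graded ideal J of R (i.e. J² = J) such that R = Rx + J and Rx ∩ J = {0}. -/
/-!
From `x = x²y` we get that `e = xy` is an idempotent of degree `0` generating the same ideal as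
`x`. For an idempotent `e`, the ideals `Re` and `R(1 - e)` are comaximal with product
`R·e(1 - e) = 0`, hence complementary, and `R(1 - e)` is idempotent and graded since `1 - e`
is homogeneous of degree `0`.
-/

open Ideal

theorem Ideal.span_singleton_sup_span_singleton_one_sub {R : Type*} [CommRing R] (e : R) :
    span {e} ⊔ span {1 - e} = ⊤ := by
  have h := add_mem (mem_sup_left (mem_span_singleton_self e))
    (mem_sup_right (mem_span_singleton_self (1 - e)))
  rwa [add_sub_cancel, ← eq_top_iff_one] at h

namespace IsIdempotentElem

variable {R : Type*} [CommRing R] {e : R}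

theorem span_singleton (he : IsIdempotentElem e) : IsIdempotentElem (span {e}) := by
  rw [IsIdempotentElem, span_singleton_mul_span_singleton, he.eq]

theorem span_singleton_inf_span_singleton_one_sub (he : IsIdempotentElem e) :
    span {e} ⊓ span {1 - e} = ⊥ := by
  rw [← mul_eq_inf_of_coprime (span_singleton_sup_span_singleton_one_sub e),
    span_singleton_mul_span_singleton, he.mul_one_sub_self, span_singleton_zero]

end IsIdempotentElem

section VonNeumannRegular

variable {R : Type*} [CommRing R] {x y : R}

theorem isIdempotentElem_mul_of_eq_sq_mul (h : x = x ^ 2 * y) : IsIdempotentElem (x * y) := by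
  rw [IsIdempotentElem, show x * y * (x * y) = x ^ 2 * y * y by ring, ← h]

theorem span_singleton_eq_span_mul_of_eq_sq_mul (h : x = x ^ 2 * y) :
    span {x} = span {x * y} :=
  le_antisymm (span_singleton_le_span_singleton.mpr ⟨x, h.trans (by ring)⟩)
    (span_singleton_le_span_singleton.mpr (dvd_mul_right x y))

end VonNeumannRegular

theorem Ideal.isHomogeneous_span_one_sub {ι R : Type*} [AddMonoid ι] [DecidableEq ι] [CommRing R]
    (𝒜 : ι → AddSubgroup R) [GradedRing 𝒜] {e : R} (he : e ∈ 𝒜 0) :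
    (span {1 - e}).IsHomogeneous 𝒜 :=
  homogeneous_span 𝒜 _ fun _ hz ↦
    ⟨0, (Set.mem_singleton_iff.mp hz) ▸ sub_mem (SetLike.one_mem_graded 𝒜) he⟩

theorem stmt19_general {ι R : Type*} [AddGroup ι] [DecidableEq ι] [CommRing R]
    (𝒜 : ι → AddSubgroup R) [GradedRing 𝒜]
    (hreg : GradedVNRegular 𝒜)
    (x : R) (hx : SetLike.IsHomogeneousElem 𝒜 x) :
    ∃ J : Ideal R, J.IsHomogeneous 𝒜 ∧ J * J = J ∧
      Ideal.span {x} ⊔ J = ⊤ ∧ Ideal.span {x} ⊓ J = ⊥ := by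
  obtain ⟨g, hg⟩ := hx
  obtain ⟨y, hy, hxy⟩ := hreg g x hg
  have hdeg : x * y ∈ 𝒜 0 := add_neg_cancel g ▸ SetLike.mul_mem_graded hg hy
  have hidem := isIdempotentElem_mul_of_eq_sq_mul hxy
  rw [span_singleton_eq_span_mul_of_eq_sq_mul hxy]
  exact ⟨span {1 - x * y}, isHomogeneous_span_one_sub 𝒜 hdeg, hidem.one_sub.span_singleton,
    span_singleton_sup_span_singleton_one_sub _, hidem.span_singleton_inf_span_singleton_one_sub⟩

/-- Let `R` be a graded von Neumann regular ring and `x ∈ h(R)`. Then there exists an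
idempotent graded ideal `J` of `R` (`J² = J`) such that `R = Rx + J` and `Rx ∩ J = {0}`. -/
theorem stmt19 {ι R : Type*} [AddGroup ι] [DecidableEq ι] [CommRing R] [Nontrivial R]
    (𝒜 : ι → AddSubgroup R) [GradedRing 𝒜]
    (hreg : GradedVNRegular 𝒜)
    (x : R) (hx : SetLike.IsHomogeneousElem 𝒜 x) :
    ∃ J : Ideal R, J.IsHomogeneous 𝒜 ∧ J * J = J ∧
      Ideal.span {x} ⊔ J = ⊤ ∧ Ideal.span {x} ⊓ J = ⊥ :=
  stmt19_general 𝒜 hreg x hx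
end
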